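/- arXiv:2511.11254 — 6 statements merged into one kernel-verified Lean document; each statement's English description precedes it below -/
import Mathlib

section
/- Let G be a finite group, F a group, (F, G, ◁, ▷) a matched pair, and σ, τ cocycle data over k, and let H = k^G τ#_σ kF be the associated Hopf algebra. If H admits a coquasitriangular structure, then O_f O_{f'} = O_{f'} O_f for all f, f' ∈ F, where O_f = {x ▷ f : x ∈ G} and O_f O_{f'} = {x y : x ∈ O_f, y ∈ O_{f'}} ⊆ F. -/
/-- A matched pair of groups `(F, G, ◁, ▷)`: `rtr g f = g ▷ f` is an action of the
group `G` on the set `F`, and `ltl g f = g ◁ f` is an action of the group `F` on the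
set `G`, satisfying the matched pair compatibility conditions. -/
structure MatchedPair (F G : Type*) [Group F] [Group G] where
  rtr : G → F → F
  ltl : G → F → G
  one_rtr : ∀ f, rtr 1 f = f
  mul_rtr : ∀ g g' f, rtr (g * g') f = rtr g (rtr g' f)
  ltl_one : ∀ g, ltl g 1 = g
  ltl_mul : ∀ g f f', ltl g (f * f') = ltl (ltl g f) f'
  rtr_mul : ∀ g f f', rtr g (f * f') = rtr g f * rtr (ltl g f) f'
  mul_ltl : ∀ g g' f, ltl (g * g') f = ltl g (rtr g' f) * ltl g' f

/-- Cocycle data `(σ, τ)` for the abelian extension `k^G τ#_σ kF`. -/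
structure CocycleData (k F G : Type*) [Field k] [Group F] [Group G]
    (mp : MatchedPair F G) where
  sig : G → F → F → kˣ
  tau : G → G → F → kˣ
  sig_one_left : ∀ g f, sig g 1 f = 1
  sig_one_right : ∀ g f, sig g f 1 = 1
  one_sig : ∀ f f', sig 1 f f' = 1
  sig_cocycle : ∀ g f f' f'',
    sig (mp.ltl g f) f' f'' * sig g f (f' * f'') = sig g f f' * sig g (f * f') f''
  one_tau : ∀ g f, tau 1 g f = 1
  tau_one : ∀ g f, tau g 1 f = 1
  tau_one_right : ∀ g g', tau g g' 1 = 1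
  tau_cocycle : ∀ g g' g'' f,
    tau g g' (mp.rtr g'' f) * tau (g * g') g'' f = tau g (g' * g'') f * tau g' g'' f
  compat : ∀ g g' f f',
    sig (g * g') f f' * tau g g' (f * f')
      = sig g (mp.rtr g' f) (mp.rtr (mp.ltl g' f) f') * sig g' f f' * tau g g' f
        * tau (mp.ltl g (mp.rtr g' f)) (mp.ltl g' f) f'

/-- The product `(p_g # f)(p_{g'} # f') = δ_{g ◁ f, g'} σ(g; f, f') p_g # (f f')` of two
basis elements of `H = k^G τ#_σ kF`, as an element of `H` (realized as `(G × F) →₀ k`). -/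
noncomputable def mulB {k F G : Type*} [Field k] [Group F] [Group G] [DecidableEq G]
    (mp : MatchedPair F G) (cd : CocycleData k F G mp) (i j : G × F) : (G × F) →₀ k :=
  if mp.ltl i.1 i.2 = j.1 then
    Finsupp.single (i.1, i.2 * j.2) ((cd.sig i.1 i.2 j.2 : kˣ) : k)
  else 0

/-- `R` (given by its values `R g f h f' = R(p_g # f, p_h # f')` on the basis
`{p_g # f}` of `H = k^G τ#_σ kF`) is a coquasitriangular structure on `H`:
it is convolution invertible, satisfies `R(a, bc) = Σ R(a₁, c) R(a₂, b)` and
`R(ab, c) = Σ R(a, c₁) R(b, c₂)`, and the quasi-commutativity axiom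
`Σ R(a₁, b₁) a₂ b₂ = Σ b₁ a₁ R(a₂, b₂)`, all expressed on basis elements using
`Δ(p_g # f) = Σ_x τ(g x⁻¹, x; f) (p_{g x⁻¹} # (x ▷ f)) ⊗ (p_x # f)` and
`ε(p_g # f) = δ_{g,1}`. -/
structure IsCQT {k F G : Type*} [Field k] [Group F] [Group G] [Fintype G] [DecidableEq G]
    (mp : MatchedPair F G) (cd : CocycleData k F G mp)
    (R : G → F → G → F → k) : Prop where
  conv_inv : ∃ R' : G → F → G → F → k,
    (∀ (g h : G) (f f' : F),
      ∑ x : G, ∑ y : G,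
        ((cd.tau (g * x⁻¹) x f : kˣ) : k) * ((cd.tau (h * y⁻¹) y f' : kˣ) : k) *
          R (g * x⁻¹) (mp.rtr x f) (h * y⁻¹) (mp.rtr y f') * R' x f y f'
        = (if g = 1 then (1 : k) else 0) * (if h = 1 then (1 : k) else 0)) ∧
    (∀ (g h : G) (f f' : F),
      ∑ x : G, ∑ y : G,
        ((cd.tau (g * x⁻¹) x f : kˣ) : k) * ((cd.tau (h * y⁻¹) y f' : kˣ) : k) *
          R' (g * x⁻¹) (mp.rtr x f) (h * y⁻¹) (mp.rtr y f') * R x f y f'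
        = (if g = 1 then (1 : k) else 0) * (if h = 1 then (1 : k) else 0))
  cqt1 : ∀ (g h l : G) (f f' f'' : F),
    (if mp.ltl h f' = l then (1 : k) else 0) * ((cd.sig h f' f'' : kˣ) : k)
        * R g f h (f' * f'')
      = ∑ x : G, ((cd.tau (g * x⁻¹) x f : kˣ) : k)
          * R (g * x⁻¹) (mp.rtr x f) l f'' * R x f h f'
  cqt2 : ∀ (g h l : G) (f f' f'' : F),
    (if mp.ltl g f = h then (1 : k) else 0) * ((cd.sig g f f' : kˣ) : k)
        * R g (f * f') l f''
      = ∑ x : G, ((cd.tau (l * x⁻¹) x f'' : kˣ) : k)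
          * R g f (l * x⁻¹) (mp.rtr x f'') * R h f' x f''
  qcomm : ∀ (g h : G) (f f' : F),
    (∑ x : G, ∑ y : G,
      (((cd.tau (g * x⁻¹) x f : kˣ) : k) * ((cd.tau (h * y⁻¹) y f' : kˣ) : k) *
        R (g * x⁻¹) (mp.rtr x f) (h * y⁻¹) (mp.rtr y f')) • mulB mp cd (x, f) (y, f'))
      = ∑ x : G, ∑ y : G,
        (((cd.tau (g * x⁻¹) x f : kˣ) : k) * ((cd.tau (h * y⁻¹) y f' : kˣ) : k) *
          R x f y f') • mulB mp cd (h * y⁻¹, mp.rtr y f') (g * x⁻¹, mp.rtr x f)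

/- Evaluating the quasi-commutativity axiom `Σ R(a₁, b₁) a₂ b₂ = Σ b₁ a₁ R(a₂, b₂)` at
`a = p_g # f`, `b = p_h # f'` on the coordinate `p_1 # w` gives
`R(p_g # f, p_h # f') (δ_{f f', w} - δ_{(h ▷ f')(g ▷ f), w}) = 0`. Evaluating `R⁻¹ * R = ε ⊗ ε`
at `(p_1 # f, p_1 # f')` shows `R(p_g # f, p_h # f') ≠ 0` for some `g, h`, hence
`f f' ∈ O_{f'} O_f`; as orbits are `G`-stable, `O_f O_{f'} ⊆ O_{f'} O_f`. -/

namespace MatchedPair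

variable {F G : Type*} [Group F] [Group G] (mp : MatchedPair F G)

theorem one_ltl (f : F) : mp.ltl 1 f = 1 := by
  have h := mp.mul_ltl 1 1 f
  rw [one_mul, mp.one_rtr] at h
  exact right_eq_mul.mp h

theorem image2_range_rtr_subset
    (hswap : ∀ a b : F, ∃ x y : G, mp.rtr y b * mp.rtr x a = a * b) (f f' : F) :
    Set.image2 (· * ·) (Set.range fun x : G => mp.rtr x f)
        (Set.range fun x : G => mp.rtr x f')
      ⊆ Set.image2 (· * ·) (Set.range fun x : G => mp.rtr x f')
        (Set.range fun x : G => mp.rtr x f) := by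
  rintro _ ⟨_, ⟨u, rfl⟩, _, ⟨v, rfl⟩, rfl⟩
  obtain ⟨x, y, hxy⟩ := hswap (mp.rtr u f) (mp.rtr v f')
  exact ⟨_, ⟨y * v, mp.mul_rtr y v f'⟩, _, ⟨x * u, mp.mul_rtr x u f⟩, hxy⟩

end MatchedPair

section CQT

variable {k F G : Type*} [Field k] [Group F] [Group G] [DecidableEq G]
  {mp : MatchedPair F G} {cd : CocycleData k F G mp}

open Classical in
theorem mulB_apply_one_fst (i j : G × F) (w : F) :
    mulB mp cd i j (1, w) = if i.1 = 1 ∧ j.1 = 1 ∧ i.2 * j.2 = w then 1 else 0 := by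
  obtain ⟨g, u⟩ := i
  obtain ⟨g', v⟩ := j
  unfold mulB
  by_cases hg : g = 1
  · subst hg
    rw [mp.one_ltl]
    by_cases hg' : g' = 1
    · subst hg'
      simp [cd.one_sig, Finsupp.single_apply]
    · simp [hg', Ne.symm hg']
  · simp only [hg, false_and, if_false]
    split_ifs <;> simp [Ne.symm hg]

variable [Fintype G] {R : G → F → G → F → k}

theorem IsCQT.rtr_mul_rtr_eq_of_apply_ne_zero (hR : IsCQT mp cd R) {g h : G} {a b : F}
    (hne : R g a h b ≠ 0) : mp.rtr h b * mp.rtr g a = a * b := by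
  have hw := DFunLike.congr_fun (hR.qcomm g h a b) (1, a * b)
  simp only [Finsupp.finsetSum_apply, Finsupp.smul_apply, mulB_apply_one_fst, smul_eq_mul,
    mul_ite, mul_one, mul_zero, mul_inv_eq_one, ite_and, Finset.sum_ite_irrel,
    Finset.sum_const_zero, Finset.sum_ite_eq, Finset.sum_ite_eq', Finset.mem_univ, if_true,
    mul_inv_cancel, inv_one, cd.tau_one, cd.one_tau, mp.one_rtr, Units.val_one, one_mul] at hw
  by_contra hswap
  rw [if_neg hswap] at hw
  exact hne hw

theorem IsCQT.exists_apply_ne_zero (hR : IsCQT mp cd R) (a b : F) :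
    ∃ g h : G, R g a h b ≠ 0 := by
  obtain ⟨R', -, hinv⟩ := hR.conv_inv
  by_contra! hzero
  simpa [hzero] using hinv 1 1 a b

theorem IsCQT.exists_rtr_mul_rtr_eq (hR : IsCQT mp cd R) (a b : F) :
    ∃ x y : G, mp.rtr y b * mp.rtr x a = a * b := by
  obtain ⟨g, h, hne⟩ := hR.exists_apply_ne_zero a b
  exact ⟨g, h, hR.rtr_mul_rtr_eq_of_apply_ne_zero hne⟩

end CQT

theorem orbits_commute_of_cqt_general {k F G : Type*} [Field k]
    [Group F] [Group G] [Fintype G] [DecidableEq G]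
    (mp : MatchedPair F G) (cd : CocycleData k F G mp)
    (hR : ∃ R : G → F → G → F → k, IsCQT mp cd R) (f f' : F) :
    Set.image2 (· * ·) (Set.range fun x : G => mp.rtr x f)
        (Set.range fun x : G => mp.rtr x f')
      = Set.image2 (· * ·) (Set.range fun x : G => mp.rtr x f')
        (Set.range fun x : G => mp.rtr x f) := by
  obtain ⟨R, hR⟩ := hR
  exact (mp.image2_range_rtr_subset hR.exists_rtr_mul_rtr_eq f f').antisymm
    (mp.image2_range_rtr_subset hR.exists_rtr_mul_rtr_eq f' f)

/-- If `H = k^G τ#_σ kF` admits a coquasitriangular structure, then the orbit sets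
satisfy `O_f O_{f'} = O_{f'} O_f` for all `f, f' ∈ F`, where `O_f = {x ▷ f : x ∈ G}`. -/
theorem orbits_commute_of_cqt {k F G : Type*} [Field k] [IsAlgClosed k] [CharZero k]
    [Group F] [Group G] [Fintype G] [DecidableEq G]
    (mp : MatchedPair F G) (cd : CocycleData k F G mp)
    (hR : ∃ R : G → F → G → F → k, IsCQT mp cd R) (f f' : F) :
    Set.image2 (· * ·) (Set.range fun x : G => mp.rtr x f)
        (Set.range fun x : G => mp.rtr x f')
      = Set.image2 (· * ·) (Set.range fun x : G => mp.rtr x f')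
        (Set.range fun x : G => mp.rtr x f) :=
  orbits_commute_of_cqt_general mp cd hR f f'
end

section
/- Let G be a finite group, F a non-abelian group, (F, G, ◁, ▷) a matched pair, and σ, τ cocycle data over k, and let H = k^G τ#_σ kF be the associated Hopf algebra. If x ▷ f = f for every x ∈ G and f ∈ F, then H admits no coquasitriangular structure. -/
/-! A coquasitriangular form is convolution invertible, so for fixed `f`, `f'` it cannot vanish
on all pairs `(p_{x⁻¹} # (x ▷ f), p_{y⁻¹} # (y ▷ f'))`. Comparing coefficients of `p_1 # f f'` in the
quasi-commutativity axiom for `a = p_g # f`, `b = p_h # f'` shows that `R(a, b) = 0` unless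
`(h ▷ f')(g ▷ f) = f f'`. When `G` acts trivially on `F`, this fails for a non-commuting pair. -/

theorem MatchedPair.one_ltl_s2 {F G : Type*} [Group F] [Group G] (mp : MatchedPair F G) (f : F) :
    mp.ltl 1 f = 1 := by
  have h := mp.mul_ltl 1 1 f
  rwa [one_mul, mp.one_rtr, right_eq_mul] at h

section

variable {k F G : Type*} [Field k] [Group F] [Group G] [DecidableEq G]
  {mp : MatchedPair F G} {cd : CocycleData k F G mp}

theorem eq_one_of_mulB_apply_one_ne_zero {i j : G × F} {f : F}
    (h : mulB mp cd i j (1, f) ≠ 0) : i.1 = 1 ∧ j.1 = 1 ∧ i.2 * j.2 = f := by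
  unfold mulB at h
  split_ifs at h with hij
  · obtain ⟨hi, hf⟩ := Prod.mk.inj (Finsupp.single_apply_ne_zero.mp h).1.symm
    refine ⟨hi, ?_, hf⟩
    rw [← hij, hi, mp.one_ltl_s2]
  · exact absurd rfl h

theorem mulB_one_one (f f' : F) :
    mulB mp cd (1, f) (1, f') = Finsupp.single (1, f * f') 1 := by
  simp [mulB, mp.one_ltl_s2, cd.one_sig]

variable [Fintype G] {R : G → F → G → F → k}

theorem IsCQT.exists_apply_ne_zero_s2 (hR : IsCQT mp cd R) (f f' : F) :
    ∃ x y : G, R x⁻¹ (mp.rtr x f) y⁻¹ (mp.rtr y f') ≠ 0 := by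
  obtain ⟨R', hinv, -⟩ := hR.conv_inv
  by_contra! hzero
  simpa [hzero] using hinv 1 1 f f'

theorem IsCQT.apply_eq_zero_of_rtr_mul_rtr_ne (hR : IsCQT mp cd R) {g h : G} {f f' : F}
    (hne : mp.rtr h f' * mp.rtr g f ≠ f * f') : R g f h f' = 0 := by
  have hq := DFunLike.congr_fun (hR.qcomm g h f f') (1, f * f')
  simp only [Finsupp.coe_finsetSum, Finset.sum_apply, Finsupp.smul_apply, smul_eq_mul] at hq
  have hlhs : ∑ x : G, ∑ y : G, ((cd.tau (g * x⁻¹) x f : k) * cd.tau (h * y⁻¹) y f' *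
      R (g * x⁻¹) (mp.rtr x f) (h * y⁻¹) (mp.rtr y f')) *
        mulB mp cd (x, f) (y, f') (1, f * f') = R g f h f' := by
    have hoff : ∀ x y : G, mulB mp cd (x, f) (y, f') (1, f * f') ≠ 0 → x = 1 ∧ y = 1 :=
      fun x y hxy => (eq_one_of_mulB_apply_one_ne_zero hxy).imp_right And.left
    rw [Fintype.sum_eq_single 1, Fintype.sum_eq_single 1]
    · simp [mulB_one_one, mp.one_rtr, cd.tau_one]
    · intro y hy
      by_contra hxy
      exact hy (hoff 1 y (right_ne_zero_of_mul hxy)).2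
    · intro x hx
      refine Fintype.sum_eq_zero _ fun y => ?_
      by_contra hxy
      exact hx (hoff x y (right_ne_zero_of_mul hxy)).1
  have hrhs : ∑ x : G, ∑ y : G, ((cd.tau (g * x⁻¹) x f : k) * cd.tau (h * y⁻¹) y f' *
      R x f y f') * mulB mp cd (h * y⁻¹, mp.rtr y f') (g * x⁻¹, mp.rtr x f) (1, f * f') = 0 := by
    refine Fintype.sum_eq_zero _ fun x => Fintype.sum_eq_zero _ fun y => ?_
    by_contra hxy
    obtain ⟨hy, hx, hprod⟩ := eq_one_of_mulB_apply_one_ne_zero (right_ne_zero_of_mul hxy)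
    rw [mul_inv_eq_one] at hx hy
    subst hx hy
    exact hne hprod
  rwa [hlhs, hrhs] at hq

end

theorem no_cqt_of_trivial_action_nonabelian_general {k F G : Type*} [Field k]
    [Group F] [Group G] [Fintype G] [DecidableEq G]
    (mp : MatchedPair F G) (cd : CocycleData k F G mp)
    (hF : ∃ a b : F, a * b ≠ b * a)
    (hact : ∀ (x : G) (f : F), mp.rtr x f = f) :
    ¬ ∃ R : G → F → G → F → k, IsCQT mp cd R := by
  rintro ⟨R, hR⟩
  obtain ⟨a, b, hab⟩ := hF
  obtain ⟨x, y, hxy⟩ := hR.exists_apply_ne_zero_s2 a b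
  refine hxy (hR.apply_eq_zero_of_rtr_mul_rtr_ne ?_)
  simpa only [hact] using hab.symm

/-- If `F` is non-abelian and `x ▷ f = f` for all `x ∈ G`, `f ∈ F`, then
`H = k^G τ#_σ kF` admits no coquasitriangular structure. -/
theorem no_cqt_of_trivial_action_nonabelian {k F G : Type*} [Field k] [IsAlgClosed k]
    [CharZero k] [Group F] [Group G] [Fintype G] [DecidableEq G]
    (mp : MatchedPair F G) (cd : CocycleData k F G mp)
    (hF : ∃ a b : F, a * b ≠ b * a)
    (hact : ∀ (x : G) (f : F), mp.rtr x f = f) :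
    ¬ ∃ R : G → F → G → F → k, IsCQT mp cd R :=
  no_cqt_of_trivial_action_nonabelian_general mp cd hF hact
end

section
/- Let G be a finite abelian group, F a group, (F, G, ◁, ▷) a matched pair, σ cocycle data and τ trivial (τ(g, g'; f) = 1 for all g, g' ∈ G, f ∈ F). Suppose the Hopf algebra H = k^G τ#_σ kF admits a coquasitriangular structure. If f, f' ∈ F and g ∈ G satisfy g ∈ G_f and g ∉ G_{f'}, then g ◁ f'' ∉ G_{f'} for every f'' ∈ O_f, where G_f = {x ∈ G : x ▷ f = f} and O_f = {x ▷ f : x ∈ G}. -/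
namespace MatchedPair

variable {F G : Type*} [Group F] [Group G] (mp : MatchedPair F G)

theorem rtr_one (g : G) : mp.rtr g 1 = 1 := by
  simpa [mp.ltl_one] using (mp.rtr_mul g 1 1).symm

end MatchedPair

section mulB

variable {k F G : Type*} [Field k] [Group F] [Group G] [DecidableEq G]
  (mp : MatchedPair F G) (cd : CocycleData k F G mp)

theorem mulB_one_left (x y : G) (ψ : F) :
    mulB mp cd (x, 1) (y, ψ) = if x = y then Finsupp.single (x, ψ) 1 else 0 := by
  simp [mulB, mp.ltl_one, cd.sig_one_left]

theorem mulB_one_right (x y : G) (φ : F) :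
    mulB mp cd (x, φ) (y, 1) = if mp.ltl x φ = y then Finsupp.single (x, φ) 1 else 0 := by
  simp [mulB, cd.sig_one_right]

end mulB

namespace IsCQT

variable {k F G : Type*} [Field k] [Group F]

section Group

variable [Group G] [Fintype G] [DecidableEq G]
  {mp : MatchedPair F G} {cd : CocycleData k F G mp} {R : G → F → G → F → k}
  (hcqt : IsCQT mp cd R) (htau : ∀ g g' f, cd.tau g g' f = 1)
include hcqt htau

open Classical in
/-- Quasi-commutativity for `a = p_g # 1` and `b = p_h # ψ`, read off at the coefficient
of `p_p # ψ`. -/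
theorem qcomm_one_apply (g h p : G) (ψ : F) :
    R (g * p⁻¹) 1 (h * p⁻¹) (mp.rtr p ψ)
      = if mp.rtr (p⁻¹ * h) ψ = ψ then R ((mp.ltl p ψ)⁻¹ * g) 1 (p⁻¹ * h) ψ else 0 := by
  have H := DFunLike.congr_fun (hcqt.qcomm g h 1 ψ) (p, ψ)
  simp only [htau, Units.val_one, one_mul, mp.rtr_one, mulB_one_left, mulB_one_right, smul_ite,
    Finsupp.smul_single, smul_eq_mul, mul_one, smul_zero, Finset.sum_ite_eq, Finset.mem_univ,
    ↓reduceIte, Finsupp.finsetSum_apply] at H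
  have hy (y x : G) (hne : y ≠ p⁻¹ * h) :
      (if mp.ltl (h * y⁻¹) (mp.rtr y ψ) = g * x⁻¹
        then Finsupp.single (h * y⁻¹, mp.rtr y ψ) (R x 1 y ψ) else 0) (p, ψ) = 0 := by
    have : h * y⁻¹ ≠ p := fun e => hne (by rw [← e]; group)
    split_ifs <;> simp [this]
  have hx (x : G) (hne : x ≠ (mp.ltl p ψ)⁻¹ * g) :
      (if mp.ltl p (mp.rtr (p⁻¹ * h) ψ) = g * x⁻¹
        then Finsupp.single (p, mp.rtr (p⁻¹ * h) ψ) (R x 1 (p⁻¹ * h) ψ) else 0) (p, ψ) = 0 := by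
    by_cases hfix : mp.rtr (p⁻¹ * h) ψ = ψ
    · have : mp.ltl p ψ ≠ g * x⁻¹ := fun e => hne (by rw [e]; group)
      simp [hfix, this]
    · split_ifs <;> simp [hfix]
  rw [Fintype.sum_eq_single p (fun i hi => by simp [Ne.symm hi]), Finset.sum_comm,
    Fintype.sum_eq_single (p⁻¹ * h) (fun y hne => Finset.sum_eq_zero fun x _ => by
      simpa using hy y x hne)] at H
  simp only [mul_inv_rev, inv_inv, mul_inv_cancel_left] at H
  rw [Fintype.sum_eq_single ((mp.ltl p ψ)⁻¹ * g) hx, Finsupp.single_eq_same] at H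
  rw [H]
  by_cases hfix : mp.rtr (p⁻¹ * h) ψ = ψ
  · simp [hfix]
  · split_ifs <;> simp [Ne.symm hfix]

theorem apply_one_eq_zero_of_rtr_ne {g h : G} {ψ : F} (hh : mp.rtr h ψ ≠ ψ) :
    R g 1 h ψ = 0 := by
  classical
  simpa [hh, mp.one_rtr] using hcqt.qcomm_one_apply htau g h 1 ψ

theorem apply_one_mul_inv (g h p : G) (ψ : F) :
    R (g * p⁻¹) 1 (h * p⁻¹) (mp.rtr p ψ) = R ((mp.ltl p ψ)⁻¹ * g) 1 (p⁻¹ * h) ψ := by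
  classical
  rw [hcqt.qcomm_one_apply htau]
  split_ifs with hfix
  · rfl
  · exact (hcqt.apply_one_eq_zero_of_rtr_ne htau hfix).symm

theorem sum_apply_one_mul_apply_one (g h l : G) (ψ : F) :
    ∑ x : G, R g 1 (l * x⁻¹) (mp.rtr x ψ) * R h 1 x ψ
      = (if g = h then 1 else 0) * R g 1 l ψ := by
  simpa [mp.ltl_one, cd.sig_one_left, htau] using (hcqt.cqt2 g h l 1 1 ψ).symm

theorem exists_apply_one_ne_zero (ψ : F) : ∃ h l : G, R h 1 l ψ ≠ 0 := by
  obtain ⟨R', -, hinv⟩ := hcqt.conv_inv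
  by_contra! hzero
  simpa [htau, hzero] using hinv 1 1 1 ψ

theorem apply_one_eq_zero_of_forall_eq {h₀ h₁ : G} {ψ : F} (hne : h₀ ≠ h₁)
    (hrow : ∀ x, R h₁ 1 x ψ = R h₀ 1 x ψ) (l : G) : R h₀ 1 l ψ = 0 := by
  calc R h₀ 1 l ψ = ∑ x : G, R h₀ 1 (l * x⁻¹) (mp.rtr x ψ) * R h₀ 1 x ψ := by
        simpa using (hcqt.sum_apply_one_mul_apply_one htau h₀ h₀ l ψ).symm
    _ = ∑ x : G, R h₀ 1 (l * x⁻¹) (mp.rtr x ψ) * R h₁ 1 x ψ := by simp_rw [hrow]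
    _ = 0 := by simpa [hne] using hcqt.sum_apply_one_mul_apply_one htau h₀ h₁ l ψ

end Group

section CommGroup

variable [CommGroup G] [Fintype G] [DecidableEq G]
  {mp : MatchedPair F G} {cd : CocycleData k F G mp} {R : G → F → G → F → k}
  (hcqt : IsCQT mp cd R) (htau : ∀ g g' f, cd.tau g g' f = 1)
include hcqt htau

theorem apply_one_eq_apply_one_ltl_mul {b : G} {ψ : F} (hb : mp.rtr b ψ = ψ) (u x : G) :
    R u 1 x ψ = R ((mp.ltl b ψ)⁻¹ * (u * b)) 1 x ψ := by
  simpa [hb, mul_comm x b] using hcqt.apply_one_mul_inv htau (u * b) (x * b) b ψ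

theorem ltl_eq_self_of_rtr_eq_self {b : G} {ψ : F} (hb : mp.rtr b ψ = ψ) :
    mp.ltl b ψ = b := by
  by_contra hne
  obtain ⟨h, l, hR⟩ := hcqt.exists_apply_one_ne_zero htau ψ
  have hshift : h ≠ (mp.ltl b ψ)⁻¹ * (h * b) := by
    rw [ne_eq, eq_inv_mul_iff_mul_eq, mul_comm, mul_right_inj]
    exact hne
  exact hR (hcqt.apply_one_eq_zero_of_forall_eq htau hshift
    (fun x => (hcqt.apply_one_eq_apply_one_ltl_mul htau hb h x).symm) l)

end CommGroup

end IsCQT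

theorem ltl_not_mem_stabilizer_of_cqt_general {k F G : Type*} [Field k] [Group F] [CommGroup G]
    [Fintype G] [DecidableEq G]
    (mp : MatchedPair F G) (cd : CocycleData k F G mp)
    (htau : ∀ (g g' : G) (f : F), cd.tau g g' f = 1)
    (hR : ∃ R : G → F → G → F → k, IsCQT mp cd R)
    (f f' : F) (g : G)
    (hgf : mp.rtr g f = f) (hgf' : mp.rtr g f' ≠ f') :
    ∀ f'' ∈ Set.range (fun x : G => mp.rtr x f), mp.rtr (mp.ltl g f'') f' ≠ f' := by
  obtain ⟨R, hcqt⟩ := hR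
  rintro _ ⟨x, rfl⟩
  have hfix : mp.rtr g (mp.rtr x f) = mp.rtr x f := by
    rw [← mp.mul_rtr, mul_comm, mp.mul_rtr, hgf]
  rwa [hcqt.ltl_eq_self_of_rtr_eq_self htau hfix]

/-- (Proposition on actions, part 1.) Let `G` be a finite abelian group, `τ` trivial, and
suppose `H = k^G τ#_σ kF` admits a coquasitriangular structure. If `g ∈ G_f` and
`g ∉ G_{f'}`, then `g ◁ f'' ∉ G_{f'}` for every `f''` in the orbit `O_f`. -/
theorem ltl_not_mem_stabilizer_of_cqt {k F G : Type*} [Field k] [IsAlgClosed k]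
    [CharZero k] [Group F] [CommGroup G] [Fintype G] [DecidableEq G]
    (mp : MatchedPair F G) (cd : CocycleData k F G mp)
    (htau : ∀ (g g' : G) (f : F), cd.tau g g' f = 1)
    (hR : ∃ R : G → F → G → F → k, IsCQT mp cd R)
    (f f' : F) (g : G)
    (hgf : mp.rtr g f = f) (hgf' : mp.rtr g f' ≠ f') :
    ∀ f'' ∈ Set.range (fun x : G => mp.rtr x f), mp.rtr (mp.ltl g f'') f' ≠ f' :=
  ltl_not_mem_stabilizer_of_cqt_general mp cd htau hR f f' g hgf hgf'
end

section
/- Let G be a finite group, F a group, (F, G, ◁, ▷) a matched pair with u ▷ v = v for all u ∈ G, v ∈ F, and σ, τ trivial, and suppose the Hopf algebra H = k^G # kF admits a coquasitriangular structure. Let π : G → G' be a surjective group homomorphism onto an abelian group G'. Let V = span{v} and W = span{w} be simple right k^{G'}-comodules with coactions ρ(v) = v ⊗ Σ_{g∈G'} a^g p_g and ρ(w) = w ⊗ Σ_{h∈G'} b^h p_h, where a^g, b^h ∈ k (regarded as k^G-comodules via the coalgebra embedding k^{G'} → k^G, p_{g'} ↦ Σ_{x∈G, π(x)=g'} p_x).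 Then for all f, f' ∈ F and x ∈ G: a^{π(x)} b^{π(x ◁ f)} = a^{π(x ◁ f')} b^{π(x)}. -/
/-!
With `▷`, `σ` and `τ` trivial, for fixed `f₁, f₂ ∈ F` the values `R(p_g # f₁, p_h # f₂)` form an
element `P` of the group algebra `k[G × G]` (`cqtSlice`), and convolution of bilinear forms on `H`
becomes the product of `k[G × G]`, so convolution invertibility of `R` makes `P` a unit.
For `f₁ = 1`, `f₂ = f`, quasi-commutativity at `(p_g # 1, p_h # f)`, read off at `p_z # f`, says
`P · (z, z) = (z ◁ f, z) · P`. A character `φ` of `G` extends to the algebra map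
`k[G × G] → k`, `(u, v) ↦ φ u`, which sends the unit `P` to a nonzero scalar and therefore
forces `φ (z ◁ f) = φ z`. The theorem is this invariance for the characters `a ∘ π` and `b ∘ π`.
-/

open MonoidAlgebra

section Slice

variable {k F G : Type*} [Semiring k] [Fintype G]

noncomputable def cqtSlice (R : G → F → G → F → k) (f₁ f₂ : F) : MonoidAlgebra k (G × G) :=
  .ofCoeff (Finsupp.equivFunOnFinite.symm fun p => R p.1 f₁ p.2 f₂)

@[simp]
lemma coeff_cqtSlice (R : G → F → G → F → k) (f₁ f₂ : F) (p : G × G) :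
    (cqtSlice R f₁ f₂).coeff p = R p.1 f₁ p.2 f₂ := rfl

lemma coeff_cqtSlice_mul_cqtSlice [Group G] (R₁ R₂ : G → F → G → F → k) (f₁ f₂ : F)
    (g h : G) :
    (cqtSlice R₁ f₁ f₂ * cqtSlice R₂ f₁ f₂).coeff (g, h)
      = ∑ x : G, ∑ y : G, R₁ (g * x⁻¹) f₁ (h * y⁻¹) f₂ * R₂ x f₁ y f₂ := by
  rw [coeff_mul_apply_right, Finsupp.sum_fintype _ _ fun _ => mul_zero _,
    Fintype.sum_prod_type]
  rfl

end Slice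

lemma mulB_of_sig_eq_one {k F G : Type*} [Field k] [Group F] [Group G] [DecidableEq G]
    {mp : MatchedPair F G} {cd : CocycleData k F G mp}
    (hsig : ∀ (g : G) (f f' : F), cd.sig g f f' = 1) (i j : G × F) :
    mulB mp cd i j = if mp.ltl i.1 i.2 = j.1 then Finsupp.single (i.1, i.2 * j.2) 1 else 0 := by
  simp [mulB, hsig]

namespace IsCQT

variable {k F G : Type*} [Field k] [Group F] [Group G] [Fintype G] [DecidableEq G]
  {mp : MatchedPair F G} {cd : CocycleData k F G mp} {R : G → F → G → F → k}

lemma isUnit_cqtSlice (hR : IsCQT mp cd R) (hrtr : ∀ (u : G) (v : F), mp.rtr u v = v)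
    (htau : ∀ (g g' : G) (f : F), cd.tau g g' f = 1) (f₁ f₂ : F) :
    IsUnit (cqtSlice R f₁ f₂) := by
  obtain ⟨R', hRR', hR'R⟩ := hR.conv_inv
  have mul_eq_one : ∀ {R₁ R₂ : G → F → G → F → k}, (∀ (g h : G) (f f' : F),
      ∑ x : G, ∑ y : G,
        ((cd.tau (g * x⁻¹) x f : kˣ) : k) * ((cd.tau (h * y⁻¹) y f' : kˣ) : k) *
          R₁ (g * x⁻¹) (mp.rtr x f) (h * y⁻¹) (mp.rtr y f') * R₂ x f y f'
        = (if g = 1 then (1 : k) else 0) * (if h = 1 then (1 : k) else 0)) →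
      cqtSlice R₁ f₁ f₂ * cqtSlice R₂ f₁ f₂ = 1 := by
    intro R₁ R₂ hconv
    ext ⟨g, h⟩
    have hgh := hconv g h f₁ f₂
    simp only [htau, hrtr, Units.val_one, one_mul] at hgh
    rw [coeff_cqtSlice_mul_cqtSlice, hgh, ite_zero_mul_ite_zero, one_mul, one_def, coeff_single,
      Finsupp.single_apply]
    simp only [Prod.ext_iff, Prod.fst_one, Prod.snd_one, eq_comm]
  exact ⟨⟨_, _, mul_eq_one hRR', mul_eq_one hR'R⟩, rfl⟩

lemma apply_mul_inv_eq_apply_ltl_inv_mul (hR : IsCQT mp cd R)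
    (hrtr : ∀ (u : G) (v : F), mp.rtr u v = v) (hsig : ∀ (g : G) (f f' : F), cd.sig g f f' = 1)
    (htau : ∀ (g g' : G) (f : F), cd.tau g g' f = 1) (f : F) (g h z : G) :
    R (g * z⁻¹) 1 (h * z⁻¹) f = R ((mp.ltl z f)⁻¹ * g) 1 (z⁻¹ * h) f := by
  classical
  have hq := DFunLike.congr_fun (hR.qcomm g h 1 f) (z, f)
  simp only [mulB_of_sig_eq_one hsig, htau, hrtr, Units.val_one, one_mul, mul_one, mp.ltl_one,
    Finsupp.coe_finsetSum, Finset.sum_apply, Finsupp.smul_apply, smul_eq_mul,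
    DFunLike.ite_apply, Finsupp.single_apply, Finsupp.coe_zero, Pi.zero_apply, Prod.mk.injEq,
    and_true, mul_ite, mul_zero, ← ite_and] at hq
  have left_support : ∀ x y : G, (x = y ∧ x = z) ↔ (x = z ∧ y = z) := by
    intro x y
    constructor <;> rintro ⟨rfl, rfl⟩ <;> simp
  have right_support : ∀ x y : G, (mp.ltl (h * y⁻¹) f = g * x⁻¹ ∧ h * y⁻¹ = z) ↔
      (x = (mp.ltl z f)⁻¹ * g ∧ y = z⁻¹ * h) := by
    intro x y
    constructor
    · rintro ⟨hx, rfl⟩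
      simp [hx]
    · rintro ⟨rfl, rfl⟩
      simp
  simp only [left_support, right_support, ite_and] at hq
  simpa using hq

lemma cqtSlice_mul_single (hR : IsCQT mp cd R) (hrtr : ∀ (u : G) (v : F), mp.rtr u v = v)
    (hsig : ∀ (g : G) (f f' : F), cd.sig g f f' = 1)
    (htau : ∀ (g g' : G) (f : F), cd.tau g g' f = 1) (f : F) (z : G) :
    cqtSlice R 1 f * single (z, z) 1 = single (mp.ltl z f, z) 1 * cqtSlice R 1 f := by
  ext ⟨g, h⟩
  simpa using hR.apply_mul_inv_eq_apply_ltl_inv_mul hrtr hsig htau f g h z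

lemma map_ltl (hR : IsCQT mp cd R) (hrtr : ∀ (u : G) (v : F), mp.rtr u v = v)
    (hsig : ∀ (g : G) (f f' : F), cd.sig g f f' = 1)
    (htau : ∀ (g g' : G) (f : F), cd.tau g g' f = 1) (φ : G →* k) (f : F) (z : G) :
    φ (mp.ltl z f) = φ z := by
  let χ := lift k k (G × G) (φ.comp (MonoidHom.fst G G))
  have hP : χ (cqtSlice R 1 f) ≠ 0 := ((hR.isUnit_cqtSlice hrtr htau 1 f).map χ).ne_zero
  have hcomm := congrArg χ (hR.cqtSlice_mul_single hrtr hsig htau f z)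
  simp only [map_mul, χ, lift_single, one_smul, MonoidHom.comp_apply, MonoidHom.coe_fst] at hcomm
  exact (mul_left_cancel₀ hP (hcomm.trans (mul_comm _ _))).symm

end IsCQT

theorem onedim_comodule_coeffs_eq_of_cqt_general {k F G G' : Type*} [Field k]
    [Group F] [Group G] [Fintype G] [DecidableEq G] [CommGroup G']
    (mp : MatchedPair F G) (cd : CocycleData k F G mp)
    (hrtr : ∀ (u : G) (v : F), mp.rtr u v = v)
    (hsig : ∀ (g : G) (f f' : F), cd.sig g f f' = 1)
    (htau : ∀ (g g' : G) (f : F), cd.tau g g' f = 1)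
    (hR : ∃ R : G → F → G → F → k, IsCQT mp cd R)
    (π : G →* G')
    (a b : G' → k)
    (ha1 : a 1 = 1) (hamul : ∀ u w : G', a (u * w) = a u * a w)
    (hb1 : b 1 = 1) (hbmul : ∀ u w : G', b (u * w) = b u * b w) :
    ∀ (f f' : F) (x : G),
      a (π x) * b (π (mp.ltl x f)) = a (π (mp.ltl x f')) * b (π x) := by
  obtain ⟨R, hR⟩ := hR
  intro f f' x
  have ha : a (π (mp.ltl x f')) = a (π x) :=
    hR.map_ltl hrtr hsig htau ((⟨⟨a, ha1⟩, hamul⟩ : G' →* k).comp π) f' x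
  have hb : b (π (mp.ltl x f)) = b (π x) :=
    hR.map_ltl hrtr hsig htau ((⟨⟨b, hb1⟩, hbmul⟩ : G' →* k).comp π) f x
  rw [ha, hb]

/-- Suppose `u ▷ v = v` for all `u ∈ G`, `v ∈ F`, `σ` and `τ` are trivial, and
`H = k^G # kF` admits a coquasitriangular structure. Let `π : G → G'` be a surjective
homomorphism onto an abelian group `G'`, and let `V = span{v}`, `W = span{w}` be simple
right `k^{G'}`-comodules given by coaction coefficients `a, b : G' → k` (the comodule
axioms for a 1-dimensional `k^{G'}`-comodule amount to `a 1 = 1` and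
`a (u w) = a u * a w`). Then `a^{π(x)} b^{π(x ◁ f)} = a^{π(x ◁ f')} b^{π(x)}` for all
`f, f' ∈ F`, `x ∈ G`. -/
theorem onedim_comodule_coeffs_eq_of_cqt {k F G G' : Type*} [Field k] [IsAlgClosed k]
    [CharZero k] [Group F] [Group G] [Fintype G] [DecidableEq G] [CommGroup G']
    (mp : MatchedPair F G) (cd : CocycleData k F G mp)
    (hrtr : ∀ (u : G) (v : F), mp.rtr u v = v)
    (hsig : ∀ (g : G) (f f' : F), cd.sig g f f' = 1)
    (htau : ∀ (g g' : G) (f : F), cd.tau g g' f = 1)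
    (hR : ∃ R : G → F → G → F → k, IsCQT mp cd R)
    (π : G →* G') (hπ : Function.Surjective π)
    (a b : G' → k)
    (ha1 : a 1 = 1) (hamul : ∀ u w : G', a (u * w) = a u * a w)
    (hb1 : b 1 = 1) (hbmul : ∀ u w : G', b (u * w) = b u * b w) :
    ∀ (f f' : F) (x : G),
      a (π x) * b (π (mp.ltl x f)) = a (π (mp.ltl x f')) * b (π x) :=
  onedim_comodule_coeffs_eq_of_cqt_general mp cd hrtr hsig htau hR π a b ha1 hamul hb1 hbmul
end

section
/- Let G be a finite group, F a group, (F, G, ◁, ▷) a matched pair with u ▷ v = v for all u ∈ G, v ∈ F, and σ, τ trivial, and suppose the Hopf algebra H = k^G # kF admits a coquasitriangular structure. Let V = span{v} be a 1-dimensional right k^G-comodule with coaction ρ(v) = v ⊗ Σ_{g∈G} a^g p_g, where a^g ∈ k. Then a^g = a^{g◁f} for all g ∈ G and f ∈ F. -/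
section CharacterSum

variable {G k : Type*} [Group G] [Fintype G] [CommSemiring k] (χ : G →* k)

theorem sum_char_mul_comp_mul_inv (φ : G → k) (x : G) :
    ∑ g, χ g * φ (g * x⁻¹) = χ x * ∑ g, χ g * φ g := by
  rw [Finset.mul_sum, ← Equiv.sum_comp (Equiv.mulRight x)]
  simp [mul_left_comm, mul_comm]

theorem sum_char_mul_comp_inv_mul (φ : G → k) (x : G) :
    ∑ g, χ g * φ (x⁻¹ * g) = χ x * ∑ g, χ g * φ g := by
  rw [Finset.mul_sum, ← Equiv.sum_comp (Equiv.mulLeft x)]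
  simp [mul_assoc]

theorem sum_char_mul_mul_eq_one_of_conv_eq_single [DecidableEq G] {φ ψ : G → k}
    (hconv : ∀ q, ∑ p, φ (q * p⁻¹) * ψ p = if q = 1 then 1 else 0) :
    (∑ g, χ g * φ g) * (∑ g, χ g * ψ g) = 1 :=
  calc (∑ g, χ g * φ g) * (∑ g, χ g * ψ g)
      = ∑ p, (χ p * ∑ g, χ g * φ g) * ψ p := by
        rw [Finset.mul_sum]
        exact Finset.sum_congr rfl fun p _ => by ring
    _ = ∑ p, (∑ q, χ q * φ (q * p⁻¹)) * ψ p := by simp only [sum_char_mul_comp_mul_inv]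
    _ = ∑ q, χ q * ∑ p, φ (q * p⁻¹) * ψ p := by
        simp only [Finset.sum_mul, Finset.mul_sum, mul_assoc]
        exact Finset.sum_comm
    _ = 1 := by simp [hconv]

end CharacterSum

namespace IsCQT

variable {k F G : Type*} [Field k] [Group F] [Group G] [Fintype G] [DecidableEq G]
  {mp : MatchedPair F G} {cd : CocycleData k F G mp} {R : G → F → G → F → k}

theorem exists_conv_eq_single (hR : IsCQT mp cd R) (hrtr : ∀ u v, mp.rtr u v = v)
    (htau : ∀ g g' f, cd.tau g g' f = 1) (f : F) :
    ∃ ψ : G × G → k, ∀ q : G × G,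
      ∑ p : G × G, R (q.1 * p.1⁻¹) f (q.2 * p.2⁻¹) 1 * ψ p = if q = 1 then 1 else 0 := by
  obtain ⟨R', hR', -⟩ := hR.conv_inv
  refine ⟨fun p => R' p.1 f p.2 1, fun q => ?_⟩
  have hq := hR' q.1 q.2 f 1
  simp only [htau, hrtr, Units.val_one, one_mul] at hq
  rw [Fintype.sum_prod_type, hq, ite_zero_mul_ite_zero, one_mul]
  simp only [Prod.ext_iff, Prod.fst_one, Prod.snd_one]

theorem apply_inv_mul_eq_apply_mul_inv_ltl (hR : IsCQT mp cd R) (hrtr : ∀ u v, mp.rtr u v = v)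
    (hsig : ∀ g f f', cd.sig g f f' = 1) (htau : ∀ g g' f, cd.tau g g' f = 1)
    (z g h : G) (f : F) :
    R (z⁻¹ * g) f (z⁻¹ * h) 1 = R (g * z⁻¹) f (h * (mp.ltl z f)⁻¹) 1 := by
  classical
  have hterm (x y : G) : (h * y⁻¹ = g * x⁻¹ ∧ h * y⁻¹ = z) ↔ (y = z⁻¹ * h ∧ x = z⁻¹ * g) := by
    refine ⟨?_, ?_⟩
    · rintro ⟨hgx, rfl⟩
      exact ⟨by group, by rw [hgx]; group⟩
    · rintro ⟨rfl, rfl⟩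
      constructor <;> group
  -- compare the coefficients of `p_z # f` in quasi-commutativity for `p_g # f` and `p_h # 1`
  have hq := congrArg (fun s : (G × F) →₀ k => s (z, f)) (hR.qcomm g h f 1)
  simp only [htau, hsig, hrtr, mp.ltl_one, Units.val_one, mul_one, one_mul, mulB, smul_ite,
    Finsupp.smul_single, smul_eq_mul, smul_zero, Finset.sum_ite_eq, Finset.sum_ite_eq',
    Finset.mem_univ, ↓reduceIte, Finsupp.coe_finsetSum, Finset.sum_apply, Finsupp.single_apply,
    apply_ite (fun s : (G × F) →₀ k => s (z, f)), Finsupp.coe_zero, Pi.zero_apply,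
    Prod.mk.injEq, and_true] at hq
  simp only [← ite_and] at hq
  simp_rw [hterm] at hq
  simp only [ite_and, Finset.sum_ite_eq', Finset.mem_univ, if_true] at hq
  exact hq.symm

end IsCQT

theorem coeff_ltl_invariant_of_cqt_general {k F G : Type*} [Field k] [Group F] [Group G] [Fintype G]
    [DecidableEq G]
    (mp : MatchedPair F G) (cd : CocycleData k F G mp)
    (hrtr : ∀ (u : G) (v : F), mp.rtr u v = v)
    (hsig : ∀ (g : G) (f f' : F), cd.sig g f f' = 1)
    (htau : ∀ (g g' : G) (f : F), cd.tau g g' f = 1)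
    (hR : ∃ R : G → F → G → F → k, IsCQT mp cd R)
    (a : G → k) (ha1 : a 1 = 1) (hamul : ∀ u w : G, a (u * w) = a u * a w) :
    ∀ (g : G) (f : F), a g = a (mp.ltl g f) := by
  obtain ⟨R, hR⟩ := hR
  intro z f
  let χ : G →* k := { toFun := a, map_one' := ha1, map_mul' := hamul }
  set S := ∑ p : G × G, χ.coprod χ p * R p.1 f p.2 1
  have hS : S ≠ 0 := by
    obtain ⟨ψ, hψ⟩ := hR.exists_conv_eq_single hrtr htau f
    exact left_ne_zero_of_mul_eq_one (sum_char_mul_mul_eq_one_of_conv_eq_single _ hψ)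
  have hshift : χ z * χ z * S = χ z * χ (mp.ltl z f) * S := by
    calc χ z * χ z * S = ∑ p : G × G, χ.coprod χ p * R (z⁻¹ * p.1) f (z⁻¹ * p.2) 1 :=
          (sum_char_mul_comp_inv_mul (χ.coprod χ) (fun p => R p.1 f p.2 1) (z, z)).symm
      _ = ∑ p : G × G, χ.coprod χ p * R (p.1 * z⁻¹) f (p.2 * (mp.ltl z f)⁻¹) 1 := by
          simp_rw [hR.apply_inv_mul_eq_apply_mul_inv_ltl hrtr hsig htau]
      _ = χ z * χ (mp.ltl z f) * S :=
          sum_char_mul_comp_mul_inv (χ.coprod χ) (fun p => R p.1 f p.2 1) (z, mp.ltl z f)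
  have hz : χ z ≠ 0 := ((Group.isUnit z).map χ).ne_zero
  exact mul_left_cancel₀ hz (mul_right_cancel₀ hS hshift)

/-- Suppose `u ▷ v = v` for all `u ∈ G`, `v ∈ F`, `σ` and `τ` are trivial, and
`H = k^G # kF` admits a coquasitriangular structure. If `V = span{v}` is a
1-dimensional right `k^G`-comodule with coaction `ρ(v) = v ⊗ Σ_g a^g p_g` (the
comodule axioms amount to `a 1 = 1` and `a (u w) = a u * a w`), then
`a^g = a^{g ◁ f}` for all `g ∈ G`, `f ∈ F`. -/
theorem coeff_ltl_invariant_of_cqt {k F G : Type*} [Field k] [IsAlgClosed k]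
    [CharZero k] [Group F] [Group G] [Fintype G] [DecidableEq G]
    (mp : MatchedPair F G) (cd : CocycleData k F G mp)
    (hrtr : ∀ (u : G) (v : F), mp.rtr u v = v)
    (hsig : ∀ (g : G) (f f' : F), cd.sig g f f' = 1)
    (htau : ∀ (g g' : G) (f : F), cd.tau g g' f = 1)
    (hR : ∃ R : G → F → G → F → k, IsCQT mp cd R)
    (a : G → k) (ha1 : a 1 = 1) (hamul : ∀ u w : G, a (u * w) = a u * a w) :
    ∀ (g : G) (f : F), a g = a (mp.ltl g f) :=
  coeff_ltl_invariant_of_cqt_general mp cd hrtr hsig htau hR a ha1 hamul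
end

section
/- Let F and G be finite groups, (F, G, ◁, ▷) a matched pair, and σ, τ cocycle data. If the Hopf algebra H = k^G τ#_σ kF admits a quasitriangular structure, then O'_g O'_{g'} = O'_{g'} O'_g for all g, g' ∈ G, where O'_g = {g ◁ f : f ∈ F} ⊆ G and O'_g O'_{g'} = {x y : x ∈ O'_g, y ∈ O'_{g'}}. -/
section QT

variable {k F G : Type*} [Field k] [Group F] [Group G]
  [Fintype F] [Fintype G] [DecidableEq F] [DecidableEq G]

/-- The unit `Σ_{x ∈ G} p_x # 1` of `H = k^G τ#_σ kF`, realized in `(G × F) →₀ k`. -/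
noncomputable def oneH (k F G : Type*) [Field k] [Group F] [Group G] [Fintype G] :
    (G × F) →₀ k :=
  ∑ x : G, Finsupp.single (x, (1 : F)) (1 : k)

/-- The tensor product of two elements of `H`, as an element of `H ⊗ H` (realized as
`((G × F) × (G × F)) →₀ k`). -/
noncomputable def tensor2 (p q : (G × F) →₀ k) : ((G × F) × (G × F)) →₀ k :=
  p.sum fun i c => q.sum fun j d => Finsupp.single (i, j) (c * d)

/-- The tensor product of three elements of `H`, as an element of `H ⊗ H ⊗ H`. -/
noncomputable def tensor3 (p q r : (G × F) →₀ k) :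
    ((G × F) × (G × F) × (G × F)) →₀ k :=
  p.sum fun i c => q.sum fun j d => r.sum fun l e => Finsupp.single (i, j, l) (c * d * e)

/-- Multiplication of `H ⊗ H` (componentwise, `(a ⊗ b)(c ⊗ d) = ac ⊗ bd`). -/
noncomputable def hmul2 (mp : MatchedPair F G) (cd : CocycleData k F G mp)
    (p q : ((G × F) × (G × F)) →₀ k) : ((G × F) × (G × F)) →₀ k :=
  p.sum fun i c => q.sum fun j d =>
    (c * d) • tensor2 (mulB mp cd i.1 j.1) (mulB mp cd i.2 j.2)

/-- Multiplication of `H ⊗ H ⊗ H` (componentwise). -/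
noncomputable def hmul3 (mp : MatchedPair F G) (cd : CocycleData k F G mp)
    (p q : ((G × F) × (G × F) × (G × F)) →₀ k) :
    ((G × F) × (G × F) × (G × F)) →₀ k :=
  p.sum fun i c => q.sum fun j d =>
    (c * d) • tensor3 (mulB mp cd i.1 j.1) (mulB mp cd i.2.1 j.2.1)
      (mulB mp cd i.2.2 j.2.2)

/-- The element `R = Σ_{i,j} r i j · e_i ⊗ e_j` of `H ⊗ H` with coefficients `r`. -/
noncomputable def toH2 (r : G × F → G × F → k) : ((G × F) × (G × F)) →₀ k :=
  ∑ i : G × F, ∑ j : G × F, Finsupp.single (i, j) (r i j)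

/-- `Δ(p_g # f) = Σ_x τ(g x⁻¹, x; f)(p_{g x⁻¹} # (x ▷ f)) ⊗ (p_x # f)` on a basis
element, as an element of `H ⊗ H`. -/
noncomputable def deltaB (mp : MatchedPair F G) (cd : CocycleData k F G mp)
    (i : G × F) : ((G × F) × (G × F)) →₀ k :=
  ∑ w : G, Finsupp.single ((i.1 * w⁻¹, mp.rtr w i.2), (w, i.2))
    ((cd.tau (i.1 * w⁻¹) w i.2 : kˣ) : k)

/-- `Δᵒᵖ(p_g # f)` (the coopposite comultiplication) on a basis element. -/
noncomputable def deltaOpB (mp : MatchedPair F G) (cd : CocycleData k F G mp)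
    (i : G × F) : ((G × F) × (G × F)) →₀ k :=
  ∑ w : G, Finsupp.single ((w, i.2), (i.1 * w⁻¹, mp.rtr w i.2))
    ((cd.tau (i.1 * w⁻¹) w i.2 : kˣ) : k)

/-- `R₁₂ = Σ R⁽¹⁾ ⊗ R⁽²⁾ ⊗ 1` in `H ⊗ H ⊗ H`. -/
noncomputable def R12 (r : G × F → G × F → k) : ((G × F) × (G × F) × (G × F)) →₀ k :=
  ∑ i : G × F, ∑ j : G × F, ∑ m : G, Finsupp.single (i, j, (m, (1 : F))) (r i j)

/-- `R₁₃ = Σ R⁽¹⁾ ⊗ 1 ⊗ R⁽²⁾` in `H ⊗ H ⊗ H`. -/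
noncomputable def R13 (r : G × F → G × F → k) : ((G × F) × (G × F) × (G × F)) →₀ k :=
  ∑ i : G × F, ∑ j : G × F, ∑ m : G, Finsupp.single (i, (m, (1 : F)), j) (r i j)

/-- `R₂₃ = Σ 1 ⊗ R⁽¹⁾ ⊗ R⁽²⁾` in `H ⊗ H ⊗ H`. -/
noncomputable def R23 (r : G × F → G × F → k) : ((G × F) × (G × F) × (G × F)) →₀ k :=
  ∑ i : G × F, ∑ j : G × F, ∑ m : G, Finsupp.single ((m, (1 : F)), i, j) (r i j)

/-- `(Δ ⊗ id)(R)` in `H ⊗ H ⊗ H`, for `R` with coefficients `r`. -/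
noncomputable def deltaTensorId (mp : MatchedPair F G) (cd : CocycleData k F G mp)
    (r : G × F → G × F → k) : ((G × F) × (G × F) × (G × F)) →₀ k :=
  ∑ i : G × F, ∑ j : G × F, ∑ w : G,
    Finsupp.single ((i.1 * w⁻¹, mp.rtr w i.2), (w, i.2), j)
      (r i j * ((cd.tau (i.1 * w⁻¹) w i.2 : kˣ) : k))

/-- `(id ⊗ Δ)(R)` in `H ⊗ H ⊗ H`, for `R` with coefficients `r`. -/
noncomputable def idTensorDelta (mp : MatchedPair F G) (cd : CocycleData k F G mp)
    (r : G × F → G × F → k) : ((G × F) × (G × F) × (G × F)) →₀ k :=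
  ∑ i : G × F, ∑ j : G × F, ∑ w : G,
    Finsupp.single (i, (j.1 * w⁻¹, mp.rtr w j.2), (w, j.2))
      (r i j * ((cd.tau (j.1 * w⁻¹) w j.2 : kˣ) : k))

/-- `R = Σ_{i,j} r i j · e_i ⊗ e_j ∈ H ⊗ H` is a quasitriangular structure on
`H = k^G τ#_σ kF`: it is invertible in `H ⊗ H`, and satisfies
`(Δ ⊗ id)(R) = R₁₃ R₂₃`, `(id ⊗ Δ)(R) = R₁₃ R₁₂`, and `Δᵒᵖ(h) R = R Δ(h)` for all
`h ∈ H` (checked on basis elements, which suffices by linearity). -/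
def IsQT (mp : MatchedPair F G) (cd : CocycleData k F G mp)
    (r : G × F → G × F → k) : Prop :=
  (∃ r' : G × F → G × F → k,
      hmul2 mp cd (toH2 r) (toH2 r') = tensor2 (oneH k F G) (oneH k F G) ∧
      hmul2 mp cd (toH2 r') (toH2 r) = tensor2 (oneH k F G) (oneH k F G)) ∧
  deltaTensorId mp cd r = hmul3 mp cd (R13 r) (R23 r) ∧
  idTensorDelta mp cd r = hmul3 mp cd (R13 r) (R12 r) ∧
  ∀ i : G × F, hmul2 mp cd (deltaOpB mp cd i) (toH2 r)
    = hmul2 mp cd (toH2 r) (deltaB mp cd i)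

end QT

section Coefficients

variable {k F G : Type*} [Field k] [Fintype F] [Fintype G]

theorem tensor2_apply (p q : (G × F) →₀ k) (z : (G × F) × (G × F)) :
    tensor2 p q z = p z.1 * q z.2 := by
  classical
  obtain ⟨z₁, z₂⟩ := z
  simp [tensor2, Finsupp.sum_fintype, Finsupp.single_apply, ite_and]

theorem toH2_apply (r : G × F → G × F → k) (z : (G × F) × (G × F)) :
    toH2 r z = r z.1 z.2 := by
  classical
  obtain ⟨z₁, z₂⟩ := z
  simp [toH2, Finsupp.single_apply, ite_and]

end Coefficients

theorem Fintype.sum_sum_ite_eq_of_iff {α β M : Type*} [Fintype α] [Fintype β] [AddCommMonoid M]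
    (P : α → β → Prop) [∀ a b, Decidable (P a b)] (a₀ : α) (b₀ : β) (c : Prop) [Decidable c]
    (h : ∀ a b, P a b ↔ a = a₀ ∧ b = b₀ ∧ c) (f : α → M) :
    ∑ a, ∑ b, (if P a b then f a else 0) = if c then f a₀ else 0 := by
  classical
  have hite : ∀ a b, (if P a b then f a else 0)
      = if a = a₀ then if b = b₀ then if c then f a else 0 else 0 else 0 := fun a b => by
    simp only [h, ite_and]
  simp [hite]

section Products

variable {k F G : Type*} [Field k] [Group F] [Group G] [DecidableEq G]
  (mp : MatchedPair F G) (cd : CocycleData k F G mp)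

theorem mulB_apply_of_fst_ne (i j z : G × F) (h : z.1 ≠ i.1) :
    mulB mp cd i j z = 0 := by
  unfold mulB
  split_ifs <;> simp [Prod.ext_iff, h.symm]

theorem mulB_one_left_apply (g : G) (j z : G × F) :
    mulB mp cd (g, 1) j z = if g = j.1 then Finsupp.single j 1 z else 0 := by
  obtain ⟨g', f⟩ := j
  simp only [mulB, mp.ltl_one, cd.sig_one_left, one_mul, Units.val_one]
  split_ifs with h <;> simp [h]

theorem mulB_one_right_apply (i : G × F) (g : G) (z : G × F) :
    mulB mp cd i (g, 1) z = if mp.ltl i.1 i.2 = g then Finsupp.single i 1 z else 0 := by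
  simp only [mulB, mul_one, cd.sig_one_right, Units.val_one]
  split_ifs <;> rfl

variable [Fintype G]

theorem oneH_apply_one (x : G) : oneH k F G (x, 1) = 1 := by
  classical
  simp [oneH, Finsupp.single_apply]

variable [Fintype F]

theorem hmul2_apply (p q : ((G × F) × (G × F)) →₀ k) (z : (G × F) × (G × F)) :
    hmul2 mp cd p q z = ∑ i, ∑ j,
      p i * q j * (mulB mp cd i.1 j.1 z.1 * mulB mp cd i.2 j.2 z.2) := by
  simp [hmul2, Finsupp.sum_fintype, tensor2_apply]

theorem hmul2_deltaOpB_one_apply (a : G) (q : ((G × F) × (G × F)) →₀ k)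
    (z : (G × F) × (G × F)) :
    hmul2 mp cd (deltaOpB mp cd (a, 1)) q z = if z.2.1 * z.1.1 = a then q z else 0 := by
  classical
  simp only [hmul2_apply, deltaOpB, mp.rtr_one, cd.tau_one_right, Units.val_one,
    Finsupp.finsetSum_apply, Finset.sum_mul, Finsupp.single_apply, ite_mul, one_mul, zero_mul]
  rw [Finset.sum_comm, Finset.sum_congr rfl fun _ _ => Finset.sum_comm]
  simp only [Finset.sum_ite_eq, Finset.mem_univ, mulB_one_left_apply, Finsupp.single_apply,
    ← ite_and, mul_boole]
  refine Fintype.sum_sum_ite_eq_of_iff _ z z.1.1 _ ?_ q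
  rintro ⟨⟨g', f⟩, ⟨h', f'⟩⟩ w
  simp only [Prod.ext_iff, mul_inv_eq_iff_eq_mul]
  grind

theorem hmul2_deltaB_one_apply (a : G) (p : ((G × F) × (G × F)) →₀ k)
    (z : (G × F) × (G × F)) :
    hmul2 mp cd p (deltaB mp cd (a, 1)) z
      = if mp.ltl z.1.1 z.1.2 * mp.ltl z.2.1 z.2.2 = a then p z else 0 := by
  classical
  simp only [hmul2_apply, deltaB, mp.rtr_one, cd.tau_one_right, Units.val_one,
    Finsupp.finsetSum_apply, Finset.mul_sum, Finset.sum_mul, Finsupp.single_apply, mul_ite,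
    ite_mul, mul_one, mul_zero, zero_mul]
  rw [Finset.sum_congr rfl fun _ _ => Finset.sum_comm]
  simp only [Finset.sum_ite_eq, Finset.mem_univ, mulB_one_right_apply, Finsupp.single_apply,
    ← ite_and, mul_boole]
  refine Fintype.sum_sum_ite_eq_of_iff _ z (mp.ltl z.2.1 z.2.2) _ ?_ p
  rintro ⟨⟨g', f⟩, ⟨h', f'⟩⟩ w
  simp only [Prod.ext_iff, eq_mul_inv_iff_mul_eq]
  grind

theorem hmul2_apply_eq_zero (p q : ((G × F) × (G × F)) →₀ k) (z : (G × F) × (G × F))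
    (hp : ∀ m n, p ((z.1.1, m), (z.2.1, n)) = 0) : hmul2 mp cd p q z = 0 := by
  rw [hmul2_apply]
  refine Finset.sum_eq_zero fun ⟨⟨x, m⟩, ⟨y, n⟩⟩ _ => Finset.sum_eq_zero fun j _ => ?_
  by_cases hx : z.1.1 = x
  · by_cases hy : z.2.1 = y
    · subst hx hy
      simp [hp]
    · rw [mulB_apply_of_fst_ne mp cd (y, n) j.2 z.2 hy, mul_zero, mul_zero]
  · rw [mulB_apply_of_fst_ne mp cd (x, m) j.1 z.1 hx, zero_mul, mul_zero]

end Products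

section Quasitriangular

variable {k F G : Type*} [Field k] [Group F] [Group G] [Fintype F] [Fintype G] [DecidableEq G]
  {mp : MatchedPair F G} {cd : CocycleData k F G mp} {r : G × F → G × F → k}

theorem exists_coeff_ne_zero_of_hmul2_eq_one {r' : G × F → G × F → k}
    (hinv : hmul2 mp cd (toH2 r) (toH2 r') = tensor2 (oneH k F G) (oneH k F G)) (x y : G) :
    ∃ m n, r (x, m) (y, n) ≠ 0 := by
  by_contra! h
  have hxy := DFunLike.congr_fun hinv ((x, 1), (y, 1))
  rw [hmul2_apply_eq_zero mp cd _ _ _ fun m n => by simpa [toH2_apply] using h m n,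
    tensor2_apply, oneH_apply_one, oneH_apply_one, mul_one] at hxy
  exact zero_ne_one hxy

theorem ltl_mul_ltl_eq_of_coeff_ne_zero
    (hcomm : ∀ i, hmul2 mp cd (deltaOpB mp cd i) (toH2 r) = hmul2 mp cd (toH2 r) (deltaB mp cd i))
    {g h : G} {f f' : F} (hr : r (g, f) (h, f') ≠ 0) :
    mp.ltl g f * mp.ltl h f' = h * g := by
  have hcoeff := DFunLike.congr_fun (hcomm (h * g, 1)) ((g, f), (h, f'))
  rw [hmul2_deltaOpB_one_apply, hmul2_deltaB_one_apply, toH2_apply, if_pos rfl] at hcoeff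
  by_contra hne
  exact hr (hcoeff.trans (if_neg hne))

theorem image2_range_ltl_subset {r' : G × F → G × F → k}
    (hinv : hmul2 mp cd (toH2 r) (toH2 r') = tensor2 (oneH k F G) (oneH k F G))
    (hcomm : ∀ i, hmul2 mp cd (deltaOpB mp cd i) (toH2 r) = hmul2 mp cd (toH2 r) (deltaB mp cd i))
    (g g' : G) :
    Set.image2 (· * ·) (Set.range fun f : F => mp.ltl g f) (Set.range fun f : F => mp.ltl g' f)
      ⊆ Set.image2 (· * ·) (Set.range fun f : F => mp.ltl g' f)
          (Set.range fun f : F => mp.ltl g f) := by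
  rintro _ ⟨_, ⟨f, rfl⟩, _, ⟨f', rfl⟩, rfl⟩
  obtain ⟨m, n, hmn⟩ := exists_coeff_ne_zero_of_hmul2_eq_one hinv (mp.ltl g' f') (mp.ltl g f)
  refine ⟨_, ⟨f' * m, rfl⟩, _, ⟨f * n, rfl⟩, ?_⟩
  dsimp only
  rw [mp.ltl_mul, mp.ltl_mul, ltl_mul_ltl_eq_of_coeff_ne_zero hcomm hmn]

end Quasitriangular

theorem orbits_ltl_commute_of_qt_general {k F G : Type*} [Field k]
    [Group F] [Group G] [Fintype F] [Fintype G] [DecidableEq G]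
    (mp : MatchedPair F G) (cd : CocycleData k F G mp)
    (hR : ∃ r : G × F → G × F → k, IsQT mp cd r) :
    ∀ g g' : G,
      Set.image2 (· * ·) (Set.range fun f : F => mp.ltl g f)
          (Set.range fun f : F => mp.ltl g' f)
        = Set.image2 (· * ·) (Set.range fun f : F => mp.ltl g' f)
          (Set.range fun f : F => mp.ltl g f) := by
  obtain ⟨r, ⟨r', hinv, -⟩, -, -, hcomm⟩ := hR
  exact fun g g' =>
    (image2_range_ltl_subset hinv hcomm g g').antisymm (image2_range_ltl_subset hinv hcomm g' g)

/-- If `F` and `G` are finite and `H = k^G τ#_σ kF` admits a quasitriangular structure,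
then `O'_g O'_{g'} = O'_{g'} O'_g` for all `g, g' ∈ G`, where `O'_g = {g ◁ f : f ∈ F}`. -/
theorem orbits_ltl_commute_of_qt {k F G : Type*} [Field k] [IsAlgClosed k] [CharZero k]
    [Group F] [Group G] [Fintype F] [Fintype G] [DecidableEq F] [DecidableEq G]
    (mp : MatchedPair F G) (cd : CocycleData k F G mp)
    (hR : ∃ r : G × F → G × F → k, IsQT mp cd r) :
    ∀ g g' : G,
      Set.image2 (· * ·) (Set.range fun f : F => mp.ltl g f)
          (Set.range fun f : F => mp.ltl g' f)
        = Set.image2 (· * ·) (Set.range fun f : F => mp.ltl g' f)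
          (Set.range fun f : F => mp.ltl g f) :=
  orbits_ltl_commute_of_qt_general mp cd hR
end
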